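/- Let μ be a valuation on K[x] extending v admitting a key polynomial (a monic polynomial that is both μ-minimal and μ-irreducible), and let φ be a key polynomial of minimal degree. Then for every monic nonconstant f ∈ K[x], μ(f)/deg(f) ≤ μ(φ)/deg(φ), with equality if and only if f is μ-minimal. -/

import Mathlib

open Polynomial

section Preamble

variable {Λ : Type*} [AddCommGroup Λ] [LinearOrder Λ] [IsOrderedAddMonoid Λ]

/-- A (Krull) valuation on a commutative ring, written additively, with value `⊤` at `0`. -/
def IsVal {R : Type*} [CommRing R] (μ : R → WithTop Λ) : Prop :=
  μ 0 = ⊤ ∧ μ 1 = 0 ∧ (∀ a b, μ (a * b) = μ a + μ b) ∧ ∀ a b, min (μ a) (μ b) ≤ μ (a + b)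

variable {K : Type*} [Field K]

/-- `μ` is a valuation on `K[x]` whose restriction to `K` is `v`. -/
def ExtendsVal (v : K → WithTop Λ) (μ : Polynomial K → WithTop Λ) : Prop :=
  ∀ a : K, μ (Polynomial.C a) = v a

/-- `a ∼_μ b`: the initial terms of `a` and `b` in the graded algebra of `μ` coincide. -/
def MuEquiv (μ : Polynomial K → WithTop Λ) (a b : Polynomial K) : Prop :=
  (μ a = μ b ∧ μ a < μ (a - b)) ∨ (μ a = ⊤ ∧ μ b = ⊤)

/-- `h ∣_μ g` : the initial term of `h` divides the initial term of `g` in the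
graded algebra `G_μ`. -/
def MuDvd (μ : Polynomial K → WithTop Λ) (h g : Polynomial K) : Prop :=
  ∃ c, MuEquiv μ (h * c) g

/-- `g` is `μ`-minimal: `g ∤_μ f` for all nonzero `f` of degree smaller than `deg g`. -/
def MuMinimal (μ : Polynomial K → WithTop Λ) (g : Polynomial K) : Prop :=
  ∀ f : Polynomial K, f ≠ 0 → f.degree < g.degree → ¬ MuDvd μ g f

/-- `g` is `μ`-irreducible: the principal ideal of `G_μ` generated by the initial term of `g`
is a nonzero prime ideal. -/
def MuIrreducible (μ : Polynomial K → WithTop Λ) (g : Polynomial K) : Prop :=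
  μ g ≠ ⊤ ∧ ¬ MuDvd μ g 1 ∧ ∀ a b : Polynomial K, MuDvd μ g (a * b) → MuDvd μ g a ∨ MuDvd μ g b

/-- A (MacLane–Vaquié) key polynomial for `μ`: monic, `μ`-minimal and `μ`-irreducible. -/
def IsKeyPol (μ : Polynomial K → WithTop Λ) (φ : Polynomial K) : Prop :=
  φ.Monic ∧ MuMinimal μ φ ∧ MuIrreducible μ φ

/-- A key polynomial for `μ` of minimal degree. -/
def MinKeyPol (μ : Polynomial K → WithTop Λ) (φ : Polynomial K) : Prop :=
  IsKeyPol μ φ ∧ ∀ ψ : Polynomial K, IsKeyPol μ ψ → φ.degree ≤ ψ.degree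

/-- The coefficients of the `g`-adic expansion `f = ∑ a_s g^s`, `deg a_s < deg g`. -/
noncomputable def adicCoeff (g : Polynomial K) : Polynomial K → ℕ → Polynomial K
  | f, 0 => f %ₘ g
  | f, (s + 1) => adicCoeff g (f /ₘ g) s

/-- The truncation `μ_g` of `μ` : `μ_g (∑ a_s g^s) = min_s μ (a_s g^s)`. -/
noncomputable def truncVal (μ : Polynomial K → WithTop Λ) (g f : Polynomial K) : WithTop Λ :=
  (Finset.range (f.natDegree + 1)).inf fun s => μ (adicCoeff g f s * g ^ s)

/-- The augmented valuation `[μ; φ, γ]`, acting on `φ`-expansions by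
`ν(∑ a_s φ^s) = min_s (μ(a_s) + s γ)`. -/
noncomputable def augVal (μ : Polynomial K → WithTop Λ) (φ : Polynomial K) (γ : WithTop Λ)
    (f : Polynomial K) : WithTop Λ :=
  (Finset.range (f.natDegree + 1)).inf fun s => μ (adicCoeff φ f s) + s • γ

end Preamble

/-!
Let `n = deg φ`. Since `φ` is `μ`-minimal, `μ (Q φ + R) ≤ μ Q + μ φ` whenever `deg R < n`, and
dividing a monic `h` of degree `k n` by `φ` `k` times gives `μ h ≤ k μ(φ)`; for `h = f ^ n` this is
the inequality. A `μ`-minimal `f` satisfies it with the roles of `f` and `φ` swapped, hence equality.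

Conversely, let `initDeg μ x` be the least degree of a polynomial with the same initial form as `x`.
If `f` is monic of degree `N n` with `μ f = N μ(φ)`, then `initDeg μ (q f) ≥ initDeg μ q + N n`:
peel one factor `φ` off `f` and induct on `N`. If `f c ∼_μ g` with `deg g < deg f`, then
`c f ^ n ∼_μ g f ^ (n - 1)`, and this bound for `f ^ n` forces `deg g ≥ deg f`.
-/

namespace IsVal

variable {R : Type*} [CommRing R] {Λ : Type*} [AddCommGroup Λ] [LinearOrder Λ]
  {μ : R → WithTop Λ} (hμ : IsVal μ) {x y z : R}
include hμ

theorem map_zero : μ 0 = ⊤ := hμ.1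

theorem map_one : μ 1 = 0 := hμ.2.1

theorem map_mul (x y : R) : μ (x * y) = μ x + μ y := hμ.2.2.1 x y

theorem min_le_map_add (x y : R) : min (μ x) (μ y) ≤ μ (x + y) := hμ.2.2.2 x y

variable [IsOrderedAddMonoid Λ]

omit hμ in
def toAddValuation (hμ : IsVal μ) : AddValuation R (WithTop Λ) :=
  AddValuation.of μ hμ.1 hμ.2.1 hμ.2.2.2 hμ.2.2.1

theorem map_pow (x : R) (k : ℕ) : μ (x ^ k) = k • μ x := hμ.toAddValuation.map_pow x k

theorem map_sub_swap (x y : R) : μ (x - y) = μ (y - x) := hμ.toAddValuation.map_sub_swap x y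

theorem map_eq_of_lt_map_sub (h : μ x < μ (x - y)) : μ y = μ x :=
  hμ.toAddValuation.map_eq_of_lt_sub (by rwa [← hμ.map_sub_swap] at h)

theorem lt_map_sub_comm (h : μ x < μ (x - y)) : μ y < μ (y - x) := by
  rwa [hμ.map_eq_of_lt_map_sub h, hμ.map_sub_swap]

theorem lt_map_sub_trans (hxy : μ x < μ (x - y)) (hyz : μ y < μ (y - z)) : μ x < μ (x - z) := by
  rw [hμ.map_eq_of_lt_map_sub hxy] at hyz
  calc μ x < min (μ (x - y)) (μ (y - z)) := lt_min hxy hyz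
    _ ≤ μ (x - y + (y - z)) := hμ.min_le_map_add _ _
    _ = μ (x - z) := by rw [sub_add_sub_cancel]

theorem lt_map_sub_mul_right (hz : μ z ≠ ⊤) (h : μ x < μ (x - y)) :
    μ (x * z) < μ (x * z - y * z) := by
  rw [← sub_mul, hμ.map_mul, hμ.map_mul]
  exact WithTop.add_lt_add_right hz h

end IsVal

namespace Polynomial

theorem Monic.divByMonic_of_natDegree_eq_succ_mul {R : Type*} [CommRing R] [Nontrivial R]
    {p q : R[X]} (hp : p.Monic) (hq : q.Monic) {k : ℕ} (h : p.natDegree = (k + 1) * q.natDegree) :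
    (p /ₘ q).Monic ∧ (p /ₘ q).natDegree = k * q.natDegree := by
  have hle : q.natDegree ≤ p.natDegree := by rw [h, add_one_mul]; omega
  refine ⟨?_, by rw [natDegree_divByMonic _ hq, h, add_one_mul]; omega⟩
  rw [Monic, leadingCoeff_divByMonic_of_monic hq, hp.leadingCoeff]
  rw [degree_eq_natDegree hq.ne_zero, degree_eq_natDegree hp.ne_zero]
  exact_mod_cast hle

end Polynomial

/-- `w ∼_μ x` is encoded as `μ x < μ (x - w)`; the value is `0` when `μ x = ⊤`, where no such
`w` exists. -/
noncomputable def initDeg {K : Type*} [Field K] {Λ : Type*} [AddCommGroup Λ] [LinearOrder Λ]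
    (μ : K[X] → WithTop Λ) (x : K[X]) : ℕ :=
  sInf (natDegree '' {w | μ x < μ (x - w)})

section KeyPolynomial

variable {K : Type*} [Field K] {Λ : Type*} [AddCommGroup Λ] [LinearOrder Λ]
  {μ : K[X] → WithTop Λ} {φ f : K[X]}

theorem initDeg_le {x w : K[X]} (h : μ x < μ (x - w)) : initDeg μ x ≤ w.natDegree :=
  Nat.sInf_le ⟨w, h, rfl⟩

theorem exists_natDegree_eq_initDeg (hμ : IsVal μ) {x : K[X]} (hx : μ x ≠ ⊤) :
    ∃ w : K[X], μ x < μ (x - w) ∧ w.natDegree = initDeg μ x :=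
  Nat.sInf_mem (Set.Nonempty.image _ ⟨x, show μ x < μ (x - x) by
    rwa [sub_self, hμ.map_zero, lt_top_iff_ne_top]⟩)

theorem MuIrreducible.natDegree_pos (hμ : IsVal μ) (hirr : MuIrreducible μ φ) (hmo : φ.Monic) :
    0 < φ.natDegree := by
  rw [Nat.pos_iff_ne_zero, Ne, hmo.natDegree_eq_zero]
  rintro rfl
  exact hirr.2.1 ⟨1, Or.inl ⟨by rw [mul_one], by
    rw [mul_one, sub_self, hμ.map_zero, hμ.map_one]; exact WithTop.coe_lt_top 0⟩⟩

variable [IsOrderedAddMonoid Λ]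

namespace MuMinimal

variable (hμ : IsVal μ) (hφ : MuMinimal μ φ)
include hμ hφ

theorem map_mul_add_le {Q R : K[X]} (hR : R.degree < φ.degree) :
    μ (Q * φ + R) ≤ μ Q + μ φ := by
  by_contra! hlt
  rw [← hμ.map_mul, mul_comm] at hlt
  have hlt' : μ (φ * Q) < μ (φ * Q - -R) := by rwa [sub_neg_eq_add]
  have hR0 : R ≠ 0 := by
    rintro rfl
    rw [add_zero] at hlt
    exact hlt.false
  exact hφ (-R) (neg_ne_zero.2 hR0) (by rwa [degree_neg])
    ⟨Q, Or.inl ⟨(hμ.map_eq_of_lt_map_sub hlt').symm, hlt'⟩⟩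

variable (hmo : φ.Monic)
include hmo

theorem map_le_map_divByMonic_add (f : K[X]) : μ f ≤ μ (f /ₘ φ) + μ φ := by
  have h := hφ.map_mul_add_le hμ (Q := f /ₘ φ) (degree_modByMonic_lt f hmo)
  rwa [mul_comm, add_comm, modByMonic_add_div] at h

theorem map_le_nsmul (k : ℕ) {h : K[X]} (hh : h.Monic) (hdeg : h.natDegree = k * φ.natDegree) :
    μ h ≤ k • μ φ := by
  induction k generalizing h with
  | zero =>
    rw [zero_mul, hh.natDegree_eq_zero] at hdeg
    rw [hdeg, hμ.map_one, zero_nsmul]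
  | succ k ih =>
    obtain ⟨hq, hqdeg⟩ := hh.divByMonic_of_natDegree_eq_succ_mul hmo hdeg
    calc μ h ≤ μ (h /ₘ φ) + μ φ := hφ.map_le_map_divByMonic_add hμ hmo h
      _ ≤ k • μ φ + μ φ := add_le_add_left (ih hq hqdeg) _
      _ = (k + 1) • μ φ := (succ_nsmul _ _).symm

theorem natDegree_nsmul_le (hf : f.Monic) : φ.natDegree • μ f ≤ f.natDegree • μ φ := by
  rw [← hμ.map_pow]
  exact hφ.map_le_nsmul hμ hmo _ (hf.pow _) (by rw [hf.natDegree_pow, mul_comm])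

variable (htop : μ φ ≠ ⊤)
include htop

theorem map_divByMonic_eq (N : ℕ) (hf : f.Monic) (hdeg : f.natDegree = (N + 1) * φ.natDegree)
    (hval : μ f = (N + 1) • μ φ) : μ (f /ₘ φ) = N • μ φ := by
  obtain ⟨hf₁, hf₁deg⟩ := hf.divByMonic_of_natDegree_eq_succ_mul hmo hdeg
  refine le_antisymm (hφ.map_le_nsmul hμ hmo N hf₁ hf₁deg) ?_
  have h := hφ.map_le_map_divByMonic_add hμ hmo f
  rwa [hval, succ_nsmul, WithTop.add_le_add_iff_right htop] at h

theorem lt_map_add_divByMonic {q w : K[X]} (hf : μ f = μ (f /ₘ φ) + μ φ)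
    (h : μ (q * f) < μ (q * f - w)) :
    μ (q * (f /ₘ φ)) < μ (q * (f /ₘ φ) + (q * (f %ₘ φ) - w) /ₘ φ) := by
  have hdecomp : q * f - w =
      (q * (f /ₘ φ) + (q * (f %ₘ φ) - w) /ₘ φ) * φ + (q * (f %ₘ φ) - w) %ₘ φ := by
    linear_combination (-q) * modByMonic_add_div f φ - modByMonic_add_div (q * (f %ₘ φ) - w) φ
  have hle := hφ.map_mul_add_le hμ (Q := q * (f /ₘ φ) + (q * (f %ₘ φ) - w) /ₘ φ)
    (degree_modByMonic_lt (q * (f %ₘ φ) - w) hmo)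
  rw [← hdecomp] at hle
  rw [hμ.map_mul, hf, ← add_assoc, ← hμ.map_mul] at h
  exact (WithTop.add_lt_add_iff_right htop).1 (h.trans_le hle)

variable (hd : 0 < φ.natDegree)
include hd

theorem map_ne_top {h : K[X]} (h0 : h ≠ 0) : μ h ≠ ⊤ := by
  induction hn : h.natDegree using Nat.strong_induction_on generalizing h with
  | _ n ih =>
    intro hh
    by_cases hlt : h.natDegree < φ.natDegree
    · exact hφ h h0 (degree_lt_degree hlt)
        ⟨h, Or.inr ⟨by rw [hμ.map_mul, hh, WithTop.add_top], hh⟩⟩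
    · have hq0 : h /ₘ φ ≠ 0 := by
        rw [Ne, divByMonic_eq_zero_iff hmo]
        exact fun hdeg => hlt (natDegree_lt_natDegree h0 hdeg)
      have hle := hφ.map_le_map_divByMonic_add hμ hmo h
      rw [hh, top_le_iff, WithTop.add_eq_top] at hle
      exact ih _ (by rw [← hn, natDegree_divByMonic _ hmo]; omega) hq0 rfl (hle.resolve_right htop)

theorem initDeg_add_le_natDegree (N : ℕ) (hf : f.Monic) (hdeg : f.natDegree = N * φ.natDegree)
    (hval : μ f = N • μ φ) {q w : K[X]} (h : μ (q * f) < μ (q * f - w)) :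
    initDeg μ q + N * φ.natDegree ≤ w.natDegree := by
  induction N generalizing f q w with
  | zero =>
    rw [zero_mul, hf.natDegree_eq_zero] at hdeg
    rw [hdeg, mul_one] at h
    simpa using initDeg_le h
  | succ N ih =>
    obtain ⟨hf₁, hf₁deg⟩ := hf.divByMonic_of_natDegree_eq_succ_mul hmo hdeg
    have hf₁val := hφ.map_divByMonic_eq hμ hmo htop N hf hdeg hval
    -- `q' ∼_μ q` of least degree keeps `deg (q' * (f %ₘ φ))` below `initDeg μ q + deg φ`
    obtain ⟨q', hqq', hq'deg⟩ :=
      exists_natDegree_eq_initDeg hμ (WithTop.add_ne_top.1 (hμ.map_mul q f ▸ h.ne_top)).1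
    have h' : μ (q' * f) < μ (q' * f - w) := hμ.lt_map_sub_trans (hμ.lt_map_sub_comm
      (hμ.lt_map_sub_mul_right (hφ.map_ne_top hμ hmo htop hd hf.ne_zero) hqq')) h
    have hstep := hφ.lt_map_add_divByMonic hμ hmo htop (by rw [hval, hf₁val, succ_nsmul]) h'
    set r := q' * (f %ₘ φ) - w
    have hr0 : r /ₘ φ ≠ 0 := by
      intro hr
      rw [hr, add_zero] at hstep
      exact hstep.false
    have hIH := ih hf₁ hf₁deg hf₁val (q := q) (w := -(r /ₘ φ)) (hμ.lt_map_sub_trans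
      (hμ.lt_map_sub_mul_right (hφ.map_ne_top hμ hmo htop hd hf₁.ne_zero) hqq')
      (by rwa [sub_neg_eq_add]))
    rw [natDegree_neg, natDegree_divByMonic _ hmo] at hIH
    have hrdeg : φ.natDegree ≤ r.natDegree := by
      rw [Ne, divByMonic_eq_zero_iff hmo, not_lt] at hr0
      exact natDegree_le_natDegree hr0
    have hr : r.natDegree ≤ max (q' * (f %ₘ φ)).natDegree w.natDegree := natDegree_sub_le _ _
    have hq'f₀ : (q' * (f %ₘ φ)).natDegree < q'.natDegree + φ.natDegree :=
      natDegree_mul_le.trans_lt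
        (Nat.add_lt_add_left (natDegree_modByMonic_lt f hmo (by rintro rfl; simp at hd)) _)
    rw [add_one_mul]
    omega

theorem of_natDegree_nsmul_eq (hf : f.Monic) (heq : φ.natDegree • μ f = f.natDegree • μ φ) :
    MuMinimal μ f := by
  intro g hg0 hgdeg ⟨c, hc⟩
  rcases hc with ⟨-, hlt⟩ | ⟨-, hgtop⟩
  · obtain ⟨m, hm⟩ : ∃ m, φ.natDegree = m + 1 := ⟨_, (Nat.succ_pred_eq_of_pos hd).symm⟩
    have happrox : μ (c * f ^ φ.natDegree) < μ (c * f ^ φ.natDegree - g * f ^ m) := by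
      have h := hμ.lt_map_sub_mul_right (hφ.map_ne_top hμ hmo htop hd (hf.pow m).ne_zero) hlt
      rwa [hm, pow_succ', ← mul_assoc, mul_comm c f]
    have hmain := hφ.initDeg_add_le_natDegree hμ hmo htop hd f.natDegree (hf.pow _)
      (by rw [hf.natDegree_pow, mul_comm]) (by rw [hμ.map_pow, heq]) happrox
    have hdeg : (g * f ^ m).natDegree ≤ g.natDegree + m * f.natDegree :=
      natDegree_mul_le.trans (Nat.add_le_add_left natDegree_pow_le _)
    have hgf : g.natDegree < f.natDegree := natDegree_lt_natDegree hg0 hgdeg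
    rw [hm, mul_add_one, mul_comm] at hmain
    omega
  · exact hφ.map_ne_top hμ hmo htop hd hg0 hgtop

end MuMinimal

end KeyPolynomial

theorem weight_bound_general {K : Type*} [Field K] {Λ : Type*}
    [AddCommGroup Λ] [LinearOrder Λ] [IsOrderedAddMonoid Λ]
    (μ : Polynomial K → WithTop Λ) (hμ : IsVal μ)
    (φ : Polynomial K) (hφ : MinKeyPol μ φ) :
    ∀ f : Polynomial K, f.Monic → 0 < f.natDegree →
      φ.natDegree • μ f ≤ f.natDegree • μ φ ∧
      (φ.natDegree • μ f = f.natDegree • μ φ ↔ MuMinimal μ f) := by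
  obtain ⟨⟨hmo, hmin, hirr⟩, -⟩ := hφ
  intro f hf _
  refine ⟨hmin.natDegree_nsmul_le hμ hmo hf, fun heq => ?_, fun hfmin => ?_⟩
  · exact hmin.of_natDegree_nsmul_eq hμ hmo hirr.1 (hirr.natDegree_pos hμ hmo) hf heq
  · exact le_antisymm (hmin.natDegree_nsmul_le hμ hmo hf) (hfmin.natDegree_nsmul_le hμ hf hmo)

/-- if `φ` is a key polynomial for `μ` of minimal degree, then for every monic
nonconstant `f`, `μ(f)/deg f ≤ μ(φ)/deg φ` (stated by cross-multiplication), with equality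
if and only if `f` is `μ`-minimal. -/
theorem weight_bound {K : Type*} [Field K] {Λ : Type*}
    [AddCommGroup Λ] [LinearOrder Λ] [IsOrderedAddMonoid Λ] (v : K → WithTop Λ) (hv : IsVal v)
    (μ : Polynomial K → WithTop Λ) (hμ : IsVal μ) (hext : ExtendsVal v μ)
    (φ : Polynomial K) (hφ : MinKeyPol μ φ) :
    ∀ f : Polynomial K, f.Monic → 0 < f.natDegree →
      φ.natDegree • μ f ≤ f.natDegree • μ φ ∧
      (φ.natDegree • μ f = f.natDegree • μ φ ↔ MuMinimal μ f) :=
  weight_bound_general μ hμ φ hφ
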